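/- (Min-entropy uncertainty relation) Let Γ_0, ..., Γ_{K-1} (K ≥ 1) be d×d complex Hermitian matrices satisfying Γ_j Γ_k + Γ_k Γ_j = 2δ_{jk} I, with spectral projectors Γ_j^b = (I + (-1)^b Γ_j)/2 for b ∈ {0,1}. For a density matrix ρ define the min-entropy H_∞(Γ_j|ρ) = -log₂ max(Tr(Γ_j^0 ρ), Tr(Γ_j^1 ρ)). Then for every density matrix ρ, (1/K) ∑_{j=0}^{K-1} H_∞(Γ_j|ρ) ≥ 1 - log₂(1 + 1/√K). -/

import Mathlib

open Matrix ComplexOrder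

/-!
With `t_j = Re Tr(Γ_j ρ)` the two outcome probabilities of `Γ_j` are `(1 ± t_j)/2`, so
`H_∞(Γ_j|ρ) = 1 - log₂(1 + |t_j|)`. The anticommutation relations give `S² = ‖t‖² · 1` for
`S = ∑ t_j Γ_j`, while `Re Tr(S ρ) = ‖t‖²`; nonnegativity of the variance of `S` in the state `ρ`
therefore reads `‖t‖⁴ ≤ ‖t‖²`, i.e. `‖t‖ ≤ 1`. Concavity of `log₂` and Cauchy–Schwarz then bound
the mean of `log₂(1 + |t_j|)` by `log₂(1 + ‖t‖₁ / K) ≤ log₂(1 + 1/√K)`.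
-/

namespace Matrix

variable {n : Type*} [Fintype n] [DecidableEq n]

theorem sum_smul_mul_self_of_anticomm {ι 𝕜 : Type*} [Fintype ι] [DecidableEq ι] [Field 𝕜]
    [NeZero (2 : 𝕜)] {Γ : ι → Matrix n n 𝕜}
    (hanti : ∀ j k, Γ j * Γ k + Γ k * Γ j = (if j = k then (2 : 𝕜) else 0) • (1 : Matrix n n 𝕜))
    (t : ι → 𝕜) :
    (∑ j, t j • Γ j) * (∑ j, t j • Γ j) = (∑ j, t j ^ 2) • (1 : Matrix n n 𝕜) := by
  have hexp : (∑ j, t j • Γ j) * (∑ j, t j • Γ j) = ∑ j, ∑ k, (t j * t k) • (Γ j * Γ k) := by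
    simp only [Finset.sum_mul_sum, smul_mul_smul_comm]
  have hswap : (∑ j, t j • Γ j) * (∑ j, t j • Γ j) = ∑ j, ∑ k, (t j * t k) • (Γ k * Γ j) := by
    rw [hexp, Finset.sum_comm]
    exact Finset.sum_congr rfl fun j _ => Finset.sum_congr rfl fun k _ => by rw [mul_comm]
  refine smul_right_injective (Matrix n n 𝕜) (two_ne_zero (α := 𝕜)) ?_
  calc (2 : 𝕜) • ((∑ j, t j • Γ j) * (∑ j, t j • Γ j))
      = ∑ j, ∑ k, (t j * t k) • (Γ j * Γ k + Γ k * Γ j) := by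
        rw [two_smul]
        nth_rw 1 [hexp]
        rw [hswap]
        simp only [← Finset.sum_add_distrib, ← smul_add]
    _ = (2 : 𝕜) • ((∑ j, t j ^ 2) • (1 : Matrix n n 𝕜)) := by
        simp only [hanti, smul_smul, ← Finset.sum_smul]
        congr 1
        simp [Finset.mul_sum, sq, mul_comm]

theorem sq_re_trace_mul_le_re_trace_mul_self_mul {S ρ : Matrix n n ℂ} (hS : S.IsHermitian)
    (hρ : ρ.PosSemidef) (hρtr : ρ.trace = 1) :
    (S * ρ).trace.re ^ 2 ≤ (S * S * ρ).trace.re := by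
  set m := (S * ρ).trace.re
  set A := S - (m : ℂ) • 1
  have hA : Aᴴ = A := by simp [A, hS.eq, conjTranspose_smul]
  have hvar : 0 ≤ (A * ρ * Aᴴ).trace.re :=
    (RCLike.nonneg_iff.mp (hρ.mul_mul_conjTranspose_same A).trace_nonneg).1
  have hexp : (A * ρ * Aᴴ).trace.re = (S * S * ρ).trace.re - m ^ 2 := by
    rw [hA, trace_mul_cycle]
    simp only [A, sub_mul, mul_sub, smul_mul_assoc, mul_smul_comm, one_mul, mul_one, trace_sub,
      trace_smul, hρtr, smul_eq_mul, Complex.sub_re, Complex.re_ofReal_mul, Complex.ofReal_re]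
    ring
  linarith

theorem sum_sq_re_trace_mul_le_one {ι : Type*} [Fintype ι] [DecidableEq ι]
    {Γ : ι → Matrix n n ℂ} (hherm : ∀ j, (Γ j).IsHermitian)
    (hanti : ∀ j k, Γ j * Γ k + Γ k * Γ j = (if j = k then (2 : ℂ) else 0) • (1 : Matrix n n ℂ))
    {ρ : Matrix n n ℂ} (hρ : ρ.PosSemidef) (hρtr : ρ.trace = 1) :
    ∑ j, (Γ j * ρ).trace.re ^ 2 ≤ 1 := by
  set t := fun j => (Γ j * ρ).trace.re
  set c := ∑ j, t j ^ 2
  set S := ∑ j, (t j : ℂ) • Γ j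
  have hS : S.IsHermitian :=
    isSelfAdjoint_sum _ fun j _ => (hherm j).smul (Complex.conj_ofReal (t j))
  have hSρ : (S * ρ).trace.re = c := by
    simp [S, c, Finset.sum_mul, trace_sum, Complex.re_sum, sq, t]
  have hSSρ : (S * S * ρ).trace.re = c := by
    rw [sum_smul_mul_self_of_anticomm hanti, smul_mul_assoc, one_mul, trace_smul, hρtr]
    simp only [smul_eq_mul, mul_one, c]
    exact_mod_cast Complex.ofReal_re _
  have hc : 0 ≤ c := Finset.sum_nonneg fun j _ => sq_nonneg (t j)
  have hvar := sq_re_trace_mul_le_re_trace_mul_self_mul hS hρ hρtr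
  rw [hSρ, hSSρ] at hvar
  nlinarith

theorem re_trace_half_one_add_mul {A ρ : Matrix n n ℂ} (hρtr : ρ.trace = 1) :
    (((2 : ℂ)⁻¹ • (1 + A)) * ρ).trace.re = (1 + (A * ρ).trace.re) / 2 := by
  rw [smul_mul_assoc, trace_smul, add_mul, one_mul, trace_add, hρtr, smul_eq_mul, inv_mul_eq_div,
    Complex.div_ofNat_re, Complex.add_re, Complex.one_re]

theorem re_trace_half_one_sub_mul {A ρ : Matrix n n ℂ} (hρtr : ρ.trace = 1) :
    (((2 : ℂ)⁻¹ • (1 - A)) * ρ).trace.re = (1 - (A * ρ).trace.re) / 2 := by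
  rw [smul_mul_assoc, trace_smul, sub_mul, one_mul, trace_sub, hρtr, smul_eq_mul, inv_mul_eq_div,
    Complex.div_ofNat_re, Complex.sub_re, Complex.one_re]

end Matrix

theorem neg_logb_two_max_half_one_add_half_one_sub (x : ℝ) :
    -Real.logb 2 (max ((1 + x) / 2) ((1 - x) / 2)) = 1 - Real.logb 2 (1 + |x|) := by
  rw [max_div_div_right zero_le_two, sub_eq_add_neg, max_add_add_left, ← abs_eq_max_neg,
    Real.logb_div (by positivity) two_ne_zero, Real.logb_self_eq_one one_lt_two]
  ring

theorem Real.inv_card_mul_sum_logb_le_logb_inv_card_mul_sum {ι : Type*} [Fintype ι] [Nonempty ι]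
    {b : ℝ} (hb : 1 < b) {x : ι → ℝ} (hx : ∀ i, 0 < x i) :
    (Fintype.card ι : ℝ)⁻¹ * ∑ i, Real.logb b (x i) ≤
      Real.logb b ((Fintype.card ι : ℝ)⁻¹ * ∑ i, x i) := by
  have hjensen := strictConcaveOn_log_Ioi.concaveOn.le_map_sum (t := Finset.univ)
    (w := fun _ => (Fintype.card ι : ℝ)⁻¹) (p := x) (fun _ _ => by positivity)
    (by simp [Finset.card_univ]) (fun i _ => hx i)
  simp only [smul_eq_mul, ← Finset.mul_sum] at hjensen
  simp only [Real.logb, ← Finset.sum_div, mul_div_assoc']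
  exact div_le_div_of_nonneg_right hjensen (Real.log_pos hb).le

theorem sum_abs_le_sqrt_card_mul_sum_sq {ι : Type*} [Fintype ι] (t : ι → ℝ) :
    ∑ i, |t i| ≤ √(Fintype.card ι * ∑ i, t i ^ 2) := by
  refine Real.le_sqrt_of_sq_le ?_
  simpa [sq_abs] using sq_sum_le_card_mul_sum_sq (s := Finset.univ) (f := fun i => |t i|)

theorem inv_card_mul_sum_logb_one_add_abs_le {ι : Type*} [Fintype ι] [Nonempty ι] {t : ι → ℝ}
    (ht : ∑ i, t i ^ 2 ≤ 1) :
    (Fintype.card ι : ℝ)⁻¹ * ∑ i, Real.logb 2 (1 + |t i|) ≤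
      Real.logb 2 (1 + 1 / √(Fintype.card ι)) := by
  set N : ℝ := (Fintype.card ι : ℝ)
  have hN : 0 < N := by positivity
  have hmean : N⁻¹ * ∑ i, |t i| ≤ 1 / √N := by
    calc N⁻¹ * ∑ i, |t i| ≤ N⁻¹ * √N :=
          mul_le_mul_of_nonneg_left ((sum_abs_le_sqrt_card_mul_sum_sq t).trans
            (Real.sqrt_le_sqrt (mul_le_of_le_one_right hN.le ht))) (inv_nonneg.mpr hN.le)
      _ = 1 / √N := by rw [inv_mul_eq_div, Real.sqrt_div_self']
  calc N⁻¹ * ∑ i, Real.logb 2 (1 + |t i|)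
      ≤ Real.logb 2 (N⁻¹ * ∑ i, (1 + |t i|)) :=
        Real.inv_card_mul_sum_logb_le_logb_inv_card_mul_sum one_lt_two fun i => by positivity
    _ = Real.logb 2 (1 + N⁻¹ * ∑ i, |t i|) := by
        rw [Finset.sum_add_distrib, mul_add]
        simp [N, hN.ne']
    _ ≤ Real.logb 2 (1 + 1 / √N) :=
        Real.logb_le_logb_of_le one_lt_two (by positivity) (by linarith)

/-- Min-entropy uncertainty relation: for `K` anticommuting Hermitian
involutions with spectral projectors `Γ_j^b = (𝟙 + (-1)^b Γ_j)/2` and any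
density matrix `ρ`, `(1/K) ∑_j H_∞(Γ_j|ρ) ≥ 1 - log₂(1 + 1/√K)`, where
`H_∞(Γ_j|ρ) = -log₂ max(Tr(Γ_j^0 ρ), Tr(Γ_j^1 ρ))`. -/
theorem min_entropy_uncertainty_relation
    {d K : ℕ} (hK : 1 ≤ K)
    (Γ : Fin K → Matrix (Fin d) (Fin d) ℂ)
    (hherm : ∀ j, (Γ j).IsHermitian)
    (hanti : ∀ j k, Γ j * Γ k + Γ k * Γ j =
      (if j = k then (2 : ℂ) else 0) • (1 : Matrix (Fin d) (Fin d) ℂ))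
    (ρ : Matrix (Fin d) (Fin d) ℂ) (hρ : ρ.PosSemidef) (hρtr : ρ.trace = 1) :
    1 - Real.logb 2 (1 + 1 / Real.sqrt K) ≤
      (K : ℝ)⁻¹ * ∑ j, -Real.logb 2
        (max ((((2 : ℂ)⁻¹ • (1 + Γ j)) * ρ).trace.re)
             ((((2 : ℂ)⁻¹ • (1 - Γ j)) * ρ).trace.re)) := by
  have : NeZero K := ⟨by omega⟩
  have hmean := inv_card_mul_sum_logb_one_add_abs_le (sum_sq_re_trace_mul_le_one hherm hanti hρ hρtr)
  rw [Fintype.card_fin] at hmean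
  simp only [re_trace_half_one_add_mul hρtr, re_trace_half_one_sub_mul hρtr,
    neg_logb_two_max_half_one_add_half_one_sub, Finset.sum_sub_distrib, mul_sub]
  simp only [Finset.sum_const, Finset.card_univ, Fintype.card_fin, nsmul_eq_mul, mul_one]
  rw [inv_mul_cancel₀ (by positivity)]
  linarith
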